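/- arXiv:2409.06988 — 4 statements merged into one kernel-verified Lean document; each statement's English description precedes it below -/
import Mathlib

section
/- Let z be a complex number with arg(z) ∈ [0,π/2] ∪ [π,3π/2] and |Re z| > L > 0, and let x, y be real with |x| < L − δ for some δ > 0 and y ∈ ℝ. Then |√((z−x)² + y²)| > √(2(√2 − 1)) · δ. -/
/-!
The bound holds with the constant `1` in place of `√(2(√2 - 1))`. Writing `w = z - x`, one has
`‖w² + y²‖ ≥ (Re w)²`, and `|Re w| ≥ |Re z| - |x| > δ`.
-/

open Complex

/-- `z` lies in the closed first or third quadrant, i.e.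
`arg z ∈ [0, π/2] ∪ [π, 3π/2]`. -/
def InClosedFirstOrThirdQuadrant (z : ℂ) : Prop :=
  (0 ≤ z.re ∧ 0 ≤ z.im) ∨ (z.re ≤ 0 ∧ z.im ≤ 0)

namespace Complex

theorem norm_cpow_one_half (u : ℂ) : ‖u ^ ((1 : ℂ) / 2)‖ = √‖u‖ := by
  have h := norm_cpow_real u (1 / 2)
  push_cast at h
  rw [h, Real.sqrt_eq_rpow]

theorem sq_re_le_norm_sq_add_sq (w : ℂ) (y : ℝ) : w.re ^ 2 ≤ ‖w ^ 2 + (y : ℂ) ^ 2‖ := by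
  set u := w ^ 2 + (y : ℂ) ^ 2
  have hu_re : u.re = w.re ^ 2 + (y ^ 2 - w.im ^ 2) := by
    simp only [u, add_re, pow_two, mul_re, ofReal_re, ofReal_im]; ring
  have hu_im : u.im = 2 * w.re * w.im := by
    simp only [u, add_im, pow_two, mul_im, ofReal_re, ofReal_im]; ring
  -- With `s = y² - (Im w)²`: `‖u‖² - (Re w)⁴ = s² + 2 (Re w)² (y² + (Im w)²) ≥ 0`.
  have h : (w.re ^ 2) ^ 2 ≤ ‖u‖ ^ 2 := by
    rw [← normSq_eq_norm_sq, normSq_apply, hu_re, hu_im]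
    nlinarith [sq_nonneg (y ^ 2 - w.im ^ 2), mul_nonneg (sq_nonneg w.re)
      (add_nonneg (sq_nonneg y) (sq_nonneg w.im))]
  exact (pow_le_pow_iff_left₀ (sq_nonneg _) (norm_nonneg u) two_ne_zero).mp h

theorem abs_re_le_norm_cpow_one_half_sq_add_sq (w : ℂ) (y : ℝ) :
    |w.re| ≤ ‖(w ^ 2 + (y : ℂ) ^ 2) ^ ((1 : ℂ) / 2)‖ := by
  rw [norm_cpow_one_half, ← Real.sqrt_sq_eq_abs]
  exact Real.sqrt_le_sqrt (sq_re_le_norm_sq_add_sq w y)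

end Complex

theorem Real.sqrt_two_mul_sqrt_two_sub_one_lt_one : √(2 * (√2 - 1)) < 1 := by
  rw [Real.sqrt_lt' one_pos]
  nlinarith [Real.sq_sqrt (zero_le_two : (0 : ℝ) ≤ 2), Real.sqrt_nonneg 2]

theorem sqrt_abs_lower_bound_delta_general
    (L δ : ℝ) (hδ : 0 < δ) (z : ℂ)
    (hre : L < |z.re|)
    (x y : ℝ) (hx : |x| < L - δ) :
    ‖((z - (x : ℂ)) ^ 2 + (y : ℂ) ^ 2) ^ ((1 : ℂ) / 2)‖ >
      Real.sqrt (2 * (Real.sqrt 2 - 1)) * δ := by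
  have hshift : δ < |(z - (x : ℂ)).re| := by
    rw [sub_re, ofReal_re]
    linarith [abs_sub_abs_le_abs_sub z.re x]
  calc Real.sqrt (2 * (Real.sqrt 2 - 1)) * δ < δ :=
        mul_lt_of_lt_one_left hδ Real.sqrt_two_mul_sqrt_two_sub_one_lt_one
    _ < |(z - (x : ℂ)).re| := hshift
    _ ≤ _ := abs_re_le_norm_cpow_one_half_sq_add_sq _ y

theorem sqrt_abs_lower_bound_delta
    (L δ : ℝ) (hL : 0 < L) (hδ : 0 < δ) (z : ℂ)
    (hquad : InClosedFirstOrThirdQuadrant z)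
    (hre : L < |z.re|)
    (x y : ℝ) (hx : |x| < L - δ) :
    ‖((z - (x : ℂ)) ^ 2 + (y : ℂ) ^ 2) ^ ((1 : ℂ) / 2)‖ >
      Real.sqrt (2 * (Real.sqrt 2 - 1)) * δ :=
  sqrt_abs_lower_bound_delta_general L δ hδ z hre x y hx
end

section
/- Let k > 0 and define, for z ∈ ℂ in the closed first quadrant with Re z > L > 0 and y = (y₁, y₂) ∈ ℝ² with |y₁| ≤ L − δ, |y₂| ≤ H, the complexified distance r(z,y) = √((z − y₁)² + y₂²) (principal branch). Then there exists a constant C depending only on L, δ, H, k such that whenever |z − L| ≥ 2H: e^{−k·Im r(z,y)} ≤ C · e^{−k·Im z}. -/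
/-! If `Re w ≥ 0`, `r` lies in the closed first quadrant and `r² = w² + t²` with `t` real, then
comparing real and imaginary parts gives `Re r · Im r = Re w · Im w` and
`(Im w)² - (Im r)² = t² - ((Re r)² - (Re w)²)`. When `Im r < Im w` the first identity forces
`Re w ≤ Re r`, so the second gives `(Im w - Im r)² ≤ t²`: the imaginary part drops by at most `|t|`.
The principal square root of a point of the closed upper half plane lies in the closed first
quadrant, which applies this to `r(z, y)` with `w = z - y₁`, `t = y₂`, and `C = e^{kH}` works. -/

open Complex

noncomputable section

/-- The complexified distance `r(z, y) = √((z - y₁)² + y₂²)` (principal branch). -/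
def complexDist (z : ℂ) (y₁ y₂ : ℝ) : ℂ :=
  ((z - (y₁ : ℂ)) ^ 2 + (y₂ : ℂ) ^ 2) ^ ((1 : ℂ) / 2)

namespace Complex

lemma re_cpow_inv_two_nonneg (x : ℂ) : 0 ≤ (x ^ (2⁻¹ : ℂ)).re := by
  rw [cpow_inv_two_re]
  exact Real.sqrt_nonneg _

lemma im_cpow_inv_two_nonneg {x : ℂ} (hx : 0 ≤ x.im) : 0 ≤ (x ^ (2⁻¹ : ℂ)).im := by
  rw [cpow_inv_two_im_eq_sqrt hx]
  exact Real.sqrt_nonneg _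

lemma im_le_im_add_abs_of_sq_eq_sq_add_sq {w r : ℂ} {t : ℝ} (hw_re : 0 ≤ w.re)
    (hr_re : 0 ≤ r.re) (hr_im : 0 ≤ r.im) (h : r ^ 2 = w ^ 2 + (t : ℂ) ^ 2) :
    w.im ≤ r.im + |t| := by
  have h_re : r.re ^ 2 - r.im ^ 2 = w.re ^ 2 - w.im ^ 2 + t ^ 2 := by
    simpa [sq] using congrArg re h
  have h_im : r.re * r.im = w.re * w.im := by
    have := congrArg im h
    simp only [sq, mul_im, add_im, ofReal_re, ofReal_im, mul_zero, zero_mul, add_zero] at this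
    linarith
  by_cases hlt : w.im ≤ r.im
  · linarith [abs_nonneg t]
  push Not at hlt
  have hre_le : w.re ≤ r.re := by nlinarith
  have h_sq : (w.im - r.im) ^ 2 ≤ |t| ^ 2 := by rw [sq_abs]; nlinarith
  nlinarith [abs_nonneg t]

end Complex

lemma im_le_im_complexDist_add_abs {z : ℂ} {y₁ : ℝ} (y₂ : ℝ) (hre : y₁ ≤ z.re) (him : 0 ≤ z.im) :
    z.im ≤ (complexDist z y₁ y₂).im + |y₂| := by
  set u := (z - (y₁ : ℂ)) ^ 2 + (y₂ : ℂ) ^ 2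
  have hu : 0 ≤ u.im := by
    simp only [u, sq, add_im, mul_im, sub_re, sub_im, ofReal_re, ofReal_im]
    nlinarith
  have hdist : complexDist z y₁ y₂ = u ^ (2⁻¹ : ℂ) := by rw [complexDist, one_div]
  have h := im_le_im_add_abs_of_sq_eq_sq_add_sq (w := z - y₁) (t := y₂) (by simpa using hre)
    (re_cpow_inv_two_nonneg u) (im_cpow_inv_two_nonneg hu) (cpow_ofNat_inv_pow u 2)
  simpa [hdist] using h

theorem exp_neg_im_complexDist_bound_general
    (k L δ H : ℝ) (hk : 0 < k) (hδ : 0 < δ) :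
    ∃ C : ℝ, 0 < C ∧ ∀ (z : ℂ) (y₁ y₂ : ℝ),
      L < z.re → 0 ≤ z.im → |y₁| ≤ L - δ → |y₂| ≤ H →
      2 * H ≤ ‖z - (L : ℂ)‖ →
      Real.exp (-k * (complexDist z y₁ y₂).im) ≤ C * Real.exp (-k * z.im) := by
  refine ⟨Real.exp (k * H), Real.exp_pos _, fun z y₁ y₂ hre him hy₁ hy₂ _ => ?_⟩
  have hy₁_le : y₁ ≤ z.re := by linarith [le_abs_self y₁]
  have him_le : z.im ≤ (complexDist z y₁ y₂).im + H :=
    (im_le_im_complexDist_add_abs y₂ hy₁_le him).trans (by linarith)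
  rw [← Real.exp_add]
  gcongr
  nlinarith

theorem exp_neg_im_complexDist_bound
    (k L δ H : ℝ) (hk : 0 < k) (hL : 0 < L) (hδ : 0 < δ) (hH : 0 < H) :
    ∃ C : ℝ, 0 < C ∧ ∀ (z : ℂ) (y₁ y₂ : ℝ),
      L < z.re → 0 ≤ z.im → |y₁| ≤ L - δ → |y₂| ≤ H →
      2 * H ≤ ‖z - (L : ℂ)‖ →
      Real.exp (-k * (complexDist z y₁ y₂).im) ≤ C * Real.exp (-k * z.im) :=
  exp_neg_im_complexDist_bound_general k L δ H hk hδ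

end
end

section
/- Let g : S → ℂ be defined on S = {(z, y) : z ∈ ℂ in the closed first quadrant with Re z > L, y = (y₁,y₂) ∈ ℝ², |y₁| ≤ L−δ, |y₂| ≤ H} by g(z,y) = −(i k / 2) · H₁⁽¹⁾(k r(z,y)) · ((z − y₁, −y₂)·n(y)) / r(z,y), where r(z,y) = √((z−y₁)² + y₂²) (principal branch) and n(y) is a unit vector. Then there exists a constant C₁ = C₁(L, δ, H, k) > 0 such that |g(z,y)| ≤ C₁ · e^{−k|Im z|} / √(1 + |z|) for all (z,y) ∈ S. -/
/-!
With `w = z - y₁` we have `Re w ≥ δ`, `r² = w² + y₂²` and `Re r ≥ 0`, so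
`(r - w)(r + w) = y₂²` with `‖r + w‖ ≥ Re w`: the square root stays within `H² / δ` of `w`.
Hence `Im r ≥ Im z - H² / δ`, `‖r‖ ≥ δ` and `1 + ‖z‖ ≤ (1 + (1 + L + H) / δ) ‖r‖`.
The Hankel bound then yields the decay `e^{-k Im z}` up to the factor `e^{k H² / δ}`,
its algebraic part is `O(1 / √(1 + ‖z‖))`, and the normal component divided by `r`
is at most `1 + 2H / δ`.
-/

open Complex

noncomputable section

/-- The complexified double layer kernel
`g(z,y) = -(ik/2) H₁⁽¹⁾(k r(z,y)) ((z - y₁, -y₂) ⋅ n(y)) / r(z,y)`,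
for a target `(z, 0)` with `z` complex and a source `y = (y₁, y₂) ∈ ℝ²` with
unit normal `n(y)`. -/
def kernelG (Hf : ℂ → ℂ) (n : ℝ × ℝ → ℝ × ℝ) (k : ℝ) (z : ℂ) (y₁ y₂ : ℝ) : ℂ :=
  -(Complex.I * k / 2) * Hf (k * complexDist z y₁ y₂) *
    ((z - (y₁ : ℂ)) * ((n (y₁, y₂)).1 : ℂ) + (-(y₂ : ℂ)) * ((n (y₁, y₂)).2 : ℂ)) /
    complexDist z y₁ y₂

namespace Complex

lemma re_sq_le_norm_sq_add_sq (w : ℂ) (c : ℝ) : w.re ^ 2 ≤ ‖w ^ 2 + (c : ℂ) ^ 2‖ := by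
  refine (pow_le_pow_iff_left₀ (sq_nonneg _) (norm_nonneg _) two_ne_zero).1 ?_
  rw [← normSq_eq_norm_sq, normSq_apply]
  simp only [add_re, add_im, sq, mul_re, mul_im, ofReal_re, ofReal_im]
  nlinarith [sq_nonneg (w.im ^ 2 - c ^ 2), sq_nonneg (w.re * w.im), sq_nonneg (w.re * c)]

variable {r w : ℂ} {c : ℝ}

lemma re_le_norm_of_sq_eq (h : r ^ 2 = w ^ 2 + c ^ 2) : w.re ≤ ‖r‖ := by
  have : w.re ^ 2 ≤ ‖r‖ ^ 2 := by
    rw [← norm_pow, h]; exact re_sq_le_norm_sq_add_sq w c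
  nlinarith [norm_nonneg r]

lemma norm_sub_le_of_sq_eq (h : r ^ 2 = w ^ 2 + c ^ 2) (hr : 0 ≤ r.re) (hw : 0 < w.re) :
    ‖r - w‖ ≤ c ^ 2 / w.re := by
  have hrw : w.re ≤ ‖r + w‖ := by
    calc w.re ≤ (r + w).re := by rw [add_re]; linarith
      _ ≤ ‖r + w‖ := re_le_norm _
  rw [le_div_iff₀ hw]
  calc ‖r - w‖ * w.re ≤ ‖r - w‖ * ‖r + w‖ := by gcongr
    _ = c ^ 2 := by
      rw [← norm_mul, show (r - w) * (r + w) = (c : ℂ) ^ 2 by linear_combination h,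
        ← ofReal_pow, norm_real, Real.norm_of_nonneg (sq_nonneg c)]

lemma norm_le_norm_add_abs_of_sq_eq (h : r ^ 2 = w ^ 2 + c ^ 2) : ‖w‖ ≤ ‖r‖ + |c| := by
  have : ‖w‖ ^ 2 ≤ (‖r‖ + |c|) ^ 2 :=
    calc ‖w‖ ^ 2 = ‖r ^ 2 - (c : ℂ) ^ 2‖ := by rw [h, add_sub_cancel_right, norm_pow]
      _ ≤ ‖r‖ ^ 2 + |c| ^ 2 := by
        refine (norm_sub_le _ _).trans_eq ?_
        rw [norm_pow, norm_pow, norm_real, Real.norm_eq_abs]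
      _ ≤ (‖r‖ + |c|) ^ 2 := by nlinarith [norm_nonneg r, abs_nonneg c]
  exact (pow_le_pow_iff_left₀ (norm_nonneg _) (by positivity) two_ne_zero).1 this

end Complex

lemma norm_mul_add_mul_le_of_sq_add_sq_eq_one {a b : ℝ} (hab : a ^ 2 + b ^ 2 = 1) (u v : ℂ) :
    ‖u * a + v * b‖ ≤ ‖u‖ + ‖v‖ := by
  have ha : |a| ≤ 1 := (sq_le_one_iff_abs_le_one a).1 (by nlinarith [sq_nonneg b])
  have hb : |b| ≤ 1 := (sq_le_one_iff_abs_le_one b).1 (by nlinarith [sq_nonneg a])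
  calc ‖u * a + v * b‖ ≤ ‖u‖ * |a| + ‖v‖ * |b| := by
        refine (norm_add_le _ _).trans_eq ?_
        rw [norm_mul, norm_mul, norm_real, norm_real, Real.norm_eq_abs, Real.norm_eq_abs]
    _ ≤ ‖u‖ + ‖v‖ := by
        gcongr
        · exact mul_le_of_le_one_right (norm_nonneg u) ha
        · exact mul_le_of_le_one_right (norm_nonneg v) hb

lemma one_div_sqrt_add_one_div_le {a s K : ℝ} (ha : 0 < a) (hs : 1 ≤ s) (hsa : s ≤ K * a) :
    1 / √a + 1 / a ≤ (√K + K) / √s := by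
  have hs₀ : 0 < √s := Real.sqrt_pos.2 (by linarith)
  have hK : 0 ≤ K := nonneg_of_mul_nonneg_left (by linarith) ha
  rw [add_div]
  refine add_le_add ?_ ?_
  · rw [div_le_div_iff₀ (Real.sqrt_pos.2 ha) hs₀, one_mul, ← Real.sqrt_mul hK]
    exact Real.sqrt_le_sqrt hsa
  · calc 1 / a ≤ K / s := by rw [div_le_div_iff₀ ha (by linarith)]; linarith
      _ ≤ K / √s := by
        gcongr
        calc √s ≤ √(s * s) := Real.sqrt_le_sqrt (by nlinarith)
          _ = s := Real.sqrt_mul_self (by linarith)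

lemma nonneg_of_forall_norm_le_mul_exp {f : ℂ → ℂ} {C₀ : ℝ}
    (hf : ∀ w : ℂ, w ≠ 0 → ‖f w‖ ≤ C₀ * Real.exp (-w.im) * (1 / √‖w‖ + 1 / ‖w‖)) :
    0 ≤ C₀ := by
  have h := hf 1 one_ne_zero
  simp only [one_im, neg_zero, Real.exp_zero, norm_one, Real.sqrt_one, div_one, mul_one] at h
  linarith [norm_nonneg (f 1)]

lemma complexDist_sq (z : ℂ) (y₁ y₂ : ℝ) :
    complexDist z y₁ y₂ ^ 2 = (z - y₁) ^ 2 + (y₂ : ℂ) ^ 2 := by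
  rw [complexDist, one_div, cpow_ofNat_inv_pow]

lemma re_complexDist_nonneg (z : ℂ) (y₁ y₂ : ℝ) : 0 ≤ (complexDist z y₁ y₂).re := by
  rw [complexDist, one_div, cpow_inv_two_re]
  positivity

section Estimates

variable {z : ℂ} {y₁ y₂ δ H : ℝ}

lemma le_norm_complexDist (hzy : δ ≤ z.re - y₁) : δ ≤ ‖complexDist z y₁ y₂‖ :=
  hzy.trans_eq (by simp) |>.trans (Complex.re_le_norm_of_sq_eq (complexDist_sq z y₁ y₂))

lemma im_sub_le_im_complexDist (hδ : 0 < δ) (hzy : δ ≤ z.re - y₁) (hy₂ : |y₂| ≤ H) :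
    z.im - H ^ 2 / δ ≤ (complexDist z y₁ y₂).im := by
  have hw : (z - y₁).re = z.re - y₁ := by simp
  have hsub := Complex.norm_sub_le_of_sq_eq (complexDist_sq z y₁ y₂)
    (re_complexDist_nonneg z y₁ y₂) (hw ▸ hδ.trans_le hzy)
  have him : z.im - (complexDist z y₁ y₂).im ≤ ‖complexDist z y₁ y₂ - (z - y₁)‖ := by
    have := abs_im_le_norm (complexDist z y₁ y₂ - (z - y₁))
    simp only [sub_im, ofReal_im, sub_zero] at this
    linarith [neg_abs_le ((complexDist z y₁ y₂).im - z.im)]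
  have hy : y₂ ^ 2 / (z.re - y₁) ≤ H ^ 2 / δ :=
    div_le_div₀ (sq_nonneg H) (sq_le_sq' (abs_le.1 hy₂).1 (abs_le.1 hy₂).2) hδ hzy
  linarith [hw ▸ hsub]

lemma one_add_norm_le_mul_norm_complexDist {L : ℝ} (hδ : 0 < δ) (hzy : δ ≤ z.re - y₁)
    (hy₁ : |y₁| ≤ L) (hy₂ : |y₂| ≤ H) :
    1 + ‖z‖ ≤ (1 + (1 + L + H) / δ) * ‖complexDist z y₁ y₂‖ := by
  set ρ := ‖complexDist z y₁ y₂‖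
  have hρ : δ ≤ ρ := le_norm_complexDist hzy
  have hz : ‖z‖ ≤ ρ + H + L := by
    have hw := Complex.norm_le_norm_add_abs_of_sq_eq (complexDist_sq z y₁ y₂)
    have := norm_sub_norm_le z y₁
    rw [norm_real, Real.norm_eq_abs] at this
    linarith
  have hLH : 1 + L + H ≤ (1 + L + H) / δ * ρ := by
    rw [div_mul_eq_mul_div, le_div_iff₀ hδ]
    nlinarith [abs_nonneg y₁, abs_nonneg y₂]
  linarith

lemma norm_kernelG_le {Hf : ℂ → ℂ} {n : ℝ × ℝ → ℝ × ℝ} {k : ℝ}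
    (hn : (n (y₁, y₂)).1 ^ 2 + (n (y₁, y₂)).2 ^ 2 = 1) (hδ : 0 < δ) (hzy : δ ≤ z.re - y₁)
    (hy₂ : |y₂| ≤ H) :
    ‖kernelG Hf n k z y₁ y₂‖ ≤ |k| / 2 * ‖Hf (k * complexDist z y₁ y₂)‖ * (1 + 2 * H / δ) := by
  set ρ := ‖complexDist z y₁ y₂‖
  have hρ : δ ≤ ρ := le_norm_complexDist hzy
  have h2H : 2 * H ≤ 2 * H / δ * ρ := by
    rw [div_mul_eq_mul_div, le_div_iff₀ hδ]
    nlinarith [abs_nonneg y₂]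
  have hdot : ‖(z - y₁) * (n (y₁, y₂)).1 + -(y₂ : ℂ) * (n (y₁, y₂)).2‖ ≤ (1 + 2 * H / δ) * ρ :=
    calc _ ≤ ‖z - y₁‖ + ‖-(y₂ : ℂ)‖ := norm_mul_add_mul_le_of_sq_add_sq_eq_one hn _ _
      _ ≤ ρ + 2 * H := by
        rw [norm_neg, norm_real, Real.norm_eq_abs]
        linarith [Complex.norm_le_norm_add_abs_of_sq_eq (complexDist_sq z y₁ y₂)]
      _ ≤ (1 + 2 * H / δ) * ρ := by linarith
  rw [kernelG, norm_div, norm_mul, norm_mul, norm_neg, norm_div, norm_mul, norm_I, norm_real,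
    Real.norm_eq_abs, Complex.norm_two, one_mul, mul_div_assoc]
  gcongr
  rwa [div_le_iff₀ (hδ.trans_le hρ)]

lemma norm_hankel_complexDist_le {Hf : ℂ → ℂ} {C₀ k K : ℝ} (hk : 0 < k) (hδ : 0 < δ)
    (hHf : ∀ w : ℂ, w ≠ 0 → ‖Hf w‖ ≤ C₀ * Real.exp (-w.im) * (1 / √‖w‖ + 1 / ‖w‖))
    (hzy : δ ≤ z.re - y₁) (hy₂ : |y₂| ≤ H) (hK : 1 + ‖z‖ ≤ K * ‖complexDist z y₁ y₂‖) :
    ‖Hf (k * complexDist z y₁ y₂)‖ ≤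
      C₀ * (Real.exp (k * H ^ 2 / δ) * Real.exp (-k * z.im)) *
        ((√(K / k) + K / k) / √(1 + ‖z‖)) := by
  set r := complexDist z y₁ y₂
  have hρ : 0 < ‖r‖ := hδ.trans_le (le_norm_complexDist hzy)
  have hkr : ‖(k : ℂ) * r‖ = k * ‖r‖ := by rw [norm_mul, norm_real, Real.norm_of_nonneg hk.le]
  have hexp : Real.exp (-((k : ℂ) * r).im) ≤
      Real.exp (k * H ^ 2 / δ) * Real.exp (-k * z.im) := by
    rw [← Real.exp_add, Real.exp_le_exp, mul_im, ofReal_re, ofReal_im, zero_mul, add_zero]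
    have := mul_le_mul_of_nonneg_left (im_sub_le_im_complexDist hδ hzy hy₂) hk.le
    rw [mul_sub, ← mul_div_assoc] at this
    linarith
  have hsum : 1 / √‖(k : ℂ) * r‖ + 1 / ‖(k : ℂ) * r‖ ≤ (√(K / k) + K / k) / √(1 + ‖z‖) := by
    rw [hkr]
    refine one_div_sqrt_add_one_div_le (by positivity) (by linarith [norm_nonneg z]) ?_
    calc 1 + ‖z‖ ≤ K * ‖r‖ := hK
      _ = K / k * (k * ‖r‖) := by field_simp
  have hC₀ := nonneg_of_forall_norm_le_mul_exp hHf
  refine (hHf _ (mul_ne_zero (ofReal_ne_zero.2 hk.ne') (norm_pos_iff.1 hρ))).trans ?_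
  gcongr

end Estimates

theorem kernel_bound_target_complex_general
    (k L δ H C₀ : ℝ) (hk : 0 < k) (hδ : 0 < δ)
    (Hf : ℂ → ℂ)
    (hHf : ∀ w : ℂ, w ≠ 0 →
      ‖Hf w‖ ≤ C₀ * Real.exp (-w.im) *
        (1 / Real.sqrt ‖w‖ + 1 / ‖w‖))
    (n : ℝ × ℝ → ℝ × ℝ) (hn : ∀ y, (n y).1 ^ 2 + (n y).2 ^ 2 = 1) :
    ∃ C₁ : ℝ, 0 < C₁ ∧ ∀ (z : ℂ) (y₁ y₂ : ℝ),
      L < z.re → 0 ≤ z.im → |y₁| ≤ L - δ → |y₂| ≤ H →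
      ‖kernelG Hf n k z y₁ y₂‖ ≤
        C₁ * Real.exp (-k * |z.im|) / Real.sqrt (1 + ‖z‖) := by
  set K := 1 + (1 + L + H) / δ
  set C := k / 2 * C₀ * Real.exp (k * H ^ 2 / δ) * (√(K / k) + K / k) * (1 + 2 * H / δ) with hC
  refine ⟨max C 1, lt_max_of_lt_right one_pos, fun z y₁ y₂ hz hzim hy₁ hy₂ => ?_⟩
  have hzy : δ ≤ z.re - y₁ := by linarith [le_abs_self y₁]
  have hK := one_add_norm_le_mul_norm_complexDist hδ hzy (show |y₁| ≤ L by linarith) hy₂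
  have hH : 0 ≤ H := (abs_nonneg y₂).trans hy₂
  rw [abs_of_nonneg hzim]
  calc ‖kernelG Hf n k z y₁ y₂‖
      ≤ |k| / 2 * ‖Hf (k * complexDist z y₁ y₂)‖ * (1 + 2 * H / δ) :=
        norm_kernelG_le (hn _) hδ hzy hy₂
    _ ≤ |k| / 2 * (C₀ * (Real.exp (k * H ^ 2 / δ) * Real.exp (-k * z.im)) *
          ((√(K / k) + K / k) / √(1 + ‖z‖))) * (1 + 2 * H / δ) := by
        gcongr
        exact norm_hankel_complexDist_le hk hδ hHf hzy hy₂ hK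
    _ = C * Real.exp (-k * z.im) / √(1 + ‖z‖) := by rw [abs_of_pos hk, hC]; ring
    _ ≤ max C 1 * Real.exp (-k * z.im) / √(1 + ‖z‖) := by gcongr; exact le_max_left _ _

/-- Kernel estimate for complex targets in the closed first quadrant beyond `L`
and real sources in the perturbed (middle) part of the boundary. -/
theorem kernel_bound_target_complex
    (k L δ H C₀ : ℝ) (hk : 0 < k) (hδ : 0 < δ) (hδL : δ < L) (hH : 0 < H)
    (Hf : ℂ → ℂ)
    (hHf : ∀ w : ℂ, w ≠ 0 →
      ‖Hf w‖ ≤ C₀ * Real.exp (-w.im) *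
        (1 / Real.sqrt ‖w‖ + 1 / ‖w‖))
    (n : ℝ × ℝ → ℝ × ℝ) (hn : ∀ y, (n y).1 ^ 2 + (n y).2 ^ 2 = 1) :
    ∃ C₁ : ℝ, 0 < C₁ ∧ ∀ (z : ℂ) (y₁ y₂ : ℝ),
      L < z.re → 0 ≤ z.im → |y₁| ≤ L - δ → |y₂| ≤ H →
      ‖kernelG Hf n k z y₁ y₂‖ ≤
        C₁ * Real.exp (-k * |z.im|) / Real.sqrt (1 + ‖z‖) :=
  kernel_bound_target_complex_general k L δ H C₀ hk hδ Hf hHf n hn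

end
end

section
/- Let (f_n) be a sequence of continuous functions on a set Γ_ℂ ⊆ ℂ × ℝ satisfying the uniform bound sup_n sup_{x} e^{k|Im x₁|}(1+|x|)^{1/2}|f_n(x)| < ∞ for some k > 0, and suppose the family (e^{k|Im x₁|}(1+|x|)^α f_n) is equicontinuous on Γ_ℂ for some 0 < α < 1/2. Then for any 0 < β ≤ k, (f_n) has a subsequence that is Cauchy in the norm ‖g‖_{α,β} = sup_x e^{β|Im x₁|}(1+|x|)^α |g(x)|. -/
open Filter Topology Metric Bornology Set TopologicalSpace

/-!
Multiply `f n` by the weight `e^{k|Im x₁|}(1+|x|)^α`. Since `α ≤ 1/2` the weighted functions are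
uniformly bounded, and they are equicontinuous by hypothesis. Extracting a subsequence that
converges at every point of a countable dense subset of `Γ_ℂ` (Tychonoff plus sequential
compactness of a countable product of metric spaces, which replaces the diagonal argument), the
equicontinuity makes it uniformly Cauchy on every compact subset, in particular on every `T_R`.
Outside `T_R` the surplus decay `(1+|x|)^{α-1/2}` of the `C^{1/2,k}` bound makes the weighted
differences uniformly smaller than `2M(1+R)^{α-1/2}`, which tends to `0`; lowering `k` to `β`
only decreases the weight.
-/

section ArzelaAscoli

variable {X E : Type*} [TopologicalSpace X] [PseudoMetricSpace E]

theorem exists_strictMono_forall_cauchySeq_of_isBounded [ProperSpace E] {ι : Type*} [Countable ι]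
    {F : ℕ → ι → E} (hF : ∀ i, IsBounded (range fun n => F n i)) :
    ∃ φ : ℕ → ℕ, StrictMono φ ∧ ∀ i, CauchySeq fun n => F (φ n) i := by
  obtain ⟨L, -, φ, hφ, hL⟩ := (isCompact_univ_pi fun i => (hF i).isCompact_closure).tendsto_subseq
    (x := F) fun n i _ => subset_closure (mem_range_self n)
  exact ⟨φ, hφ, fun i => (tendsto_pi_nhds.1 hL i).cauchySeq⟩

theorem EquicontinuousOn.eventually_dist_lt_of_cauchySeq {F : ℕ → X → E} {S D : Set X}
    (hF : EquicontinuousOn F S) (hDS : D ⊆ S) (hD : ∀ y ∈ D, CauchySeq fun n => F n y)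
    {x : X} (hx : x ∈ S) (hxD : x ∈ closure D) {ε : ℝ} (hε : 0 < ε) :
    ∃ U ∈ 𝓝[S] x, ∀ᶠ p in atTop ×ˢ atTop, ∀ z ∈ U, dist (F p.1 z) (F p.2 z) < ε := by
  obtain ⟨U, hU, hUF⟩ := (equicontinuousWithinAt_iff_pair hx).1 (hF x hx) _
    (dist_mem_uniformity (div_pos hε three_pos))
  obtain ⟨y, hyU, hyD⟩ : (U ∩ D).Nonempty :=
    (mem_closure_iff_nhdsWithin_neBot.1 hxD).nonempty_of_mem
      (inter_mem (nhdsWithin_mono x hDS hU) self_mem_nhdsWithin)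
  have hy : ∀ᶠ p in atTop ×ˢ atTop, dist (F p.1 y) (F p.2 y) < ε / 3 := by
    rw [prod_atTop_atTop_eq]
    exact (cauchySeq_iff_tendsto.1 (hD y hyD)).eventually (dist_mem_uniformity (by positivity))
  refine ⟨U, hU, hy.mono fun p hp z hz => ?_⟩
  calc dist (F p.1 z) (F p.2 z)
      ≤ dist (F p.1 z) (F p.1 y) + dist (F p.1 y) (F p.2 y) + dist (F p.2 y) (F p.2 z) :=
        dist_triangle4 _ _ _ _
    _ < ε / 3 + ε / 3 + ε / 3 := by
        gcongr
        exacts [hUF z hz y hyU p.1, hUF y hyU z hz p.2]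
    _ = ε := by ring

theorem EquicontinuousOn.uniformCauchySeqOn_of_cauchySeq {F : ℕ → X → E} {S D K : Set X}
    (hF : EquicontinuousOn F S) (hDS : D ⊆ S) (hSD : S ⊆ closure D)
    (hD : ∀ y ∈ D, CauchySeq fun n => F n y) (hK : IsCompact K) (hKS : K ⊆ S) :
    UniformCauchySeqOn F atTop K := by
  intro u hu
  obtain ⟨ε, hε, hεu⟩ := mem_uniformity_dist.1 hu
  let P : Set X → Prop := fun s => ∀ᶠ q in atTop ×ˢ atTop, ∀ x ∈ s, dist (F q.1 x) (F q.2 x) < ε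
  have hKε : P K := by
    refine hK.induction_on (p := P) (by simp [P])
      (fun s t hst ht => ht.mono fun q hq x hx => hq x (hst hx))
      (fun s t hs ht => (hs.and ht).mono fun q hq x hx => hx.elim (hq.1 x) (hq.2 x)) ?_
    intro x hx
    obtain ⟨U, hU, hUε⟩ :=
      hF.eventually_dist_lt_of_cauchySeq hDS hD (hKS hx) (hSD (hKS hx)) hε
    exact ⟨U, nhdsWithin_mono x hKS hU, hUε⟩
  exact hKε.mono fun p hp x hx => hεu (hp x hx)

theorem EquicontinuousOn.exists_strictMono_uniformCauchySeqOn [PseudoMetrizableSpace X]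
    [ProperSpace E] {F : ℕ → X → E} {S : Set X} (hF : EquicontinuousOn F S)
    (hS : IsSeparable S) (hb : ∀ x ∈ S, IsBounded (range fun n => F n x)) :
    ∃ φ : ℕ → ℕ, StrictMono φ ∧
      ∀ K ⊆ S, IsCompact K → UniformCauchySeqOn (fun n => F (φ n)) atTop K := by
  obtain ⟨D, hDS, hDc, hSD⟩ := hS.exists_countable_dense_subset
  have : Countable D := hDc.to_subtype
  obtain ⟨φ, hφ, hcauchy⟩ :=
    exists_strictMono_forall_cauchySeq_of_isBounded (F := fun n (y : D) => F n y)
      fun y => hb y (hDS y.2)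
  exact ⟨φ, hφ, fun K hKS hK => (hF.comp φ).uniformCauchySeqOn_of_cauchySeq hDS hSD
    (fun y hy => hcauchy ⟨y, hy⟩) hK hKS⟩

end ArzelaAscoli

/-- The norm `‖g‖_{α,β}` is `⨆ x, weight β α x * ‖g x‖`. -/
noncomputable def weight (k α : ℝ) (x : ℂ × ℝ) : ℝ := Real.exp (k * |x.1.im|) * (1 + ‖x‖) ^ α

theorem weight_pos (k α : ℝ) (x : ℂ × ℝ) : 0 < weight k α x := by
  unfold weight; positivity

theorem norm_weight_mul (k α : ℝ) (x : ℂ × ℝ) (z : ℂ) :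
    ‖(weight k α x : ℂ) * z‖ = weight k α x * ‖z‖ := by
  rw [norm_mul, Complex.norm_real, Real.norm_of_nonneg (weight_pos k α x).le]

theorem weight_le_rpow_mul_weight {k k' α α' R : ℝ} (hk : k ≤ k') (hα : α ≤ α') (hR : 0 < 1 + R)
    {x : ℂ × ℝ} (hx : R ≤ ‖x‖) :
    weight k α x ≤ (1 + R) ^ (α - α') * weight k' α' x := by
  have hsplit : (1 + ‖x‖) ^ α = (1 + ‖x‖) ^ (α - α') * (1 + ‖x‖) ^ α' := by
    rw [← Real.rpow_add (by positivity), sub_add_cancel]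
  have hdecay : (1 + ‖x‖) ^ (α - α') ≤ (1 + R) ^ (α - α') :=
    Real.rpow_le_rpow_of_nonpos hR (by linarith) (by linarith)
  calc weight k α x = Real.exp (k * |x.1.im|) * ((1 + ‖x‖) ^ (α - α') * (1 + ‖x‖) ^ α') := by
        rw [weight, hsplit]
    _ ≤ Real.exp (k' * |x.1.im|) * ((1 + R) ^ (α - α') * (1 + ‖x‖) ^ α') := by
        gcongr
    _ = (1 + R) ^ (α - α') * weight k' α' x := by
        rw [weight]; ring

theorem weight_le_weight {k k' α α' : ℝ} (hk : k ≤ k') (hα : α ≤ α') (x : ℂ × ℝ) :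
    weight k α x ≤ weight k' α' x := by
  simpa using weight_le_rpow_mul_weight hk hα (R := 0) (by norm_num) (norm_nonneg x)

theorem weight_mul_norm_sub_le {E : Type*} [SeminormedAddCommGroup E] {k k' α α' R M : ℝ}
    (hk : k ≤ k') (hα : α ≤ α') (hR : 0 < 1 + R) {x : ℂ × ℝ} (hx : R ≤ ‖x‖) {u v : E}
    (hu : weight k' α' x * ‖u‖ ≤ M) (hv : weight k' α' x * ‖v‖ ≤ M) :
    weight k α x * ‖u - v‖ ≤ 2 * M * (1 + R) ^ (α - α') := by
  calc weight k α x * ‖u - v‖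
      ≤ (1 + R) ^ (α - α') * weight k' α' x * (‖u‖ + ‖v‖) :=
        mul_le_mul (weight_le_rpow_mul_weight hk hα hR hx) (norm_sub_le u v) (norm_nonneg _)
          (by have := weight_pos k' α' x; positivity)
    _ = (1 + R) ^ (α - α') * (weight k' α' x * ‖u‖ + weight k' α' x * ‖v‖) := by ring
    _ ≤ (1 + R) ^ (α - α') * (M + M) := by gcongr
    _ = 2 * M * (1 + R) ^ (α - α') := by ring

theorem tendsto_one_add_rpow_atTop {γ : ℝ} (hγ : γ < 0) :
    Tendsto (fun R : ℝ => (1 + R) ^ γ) atTop (𝓝 0) := by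
  simpa [Function.comp_def] using (tendsto_rpow_neg_atTop (neg_pos.2 hγ)).comp
    (tendsto_atTop_add_const_left atTop 1 tendsto_id)

theorem weighted_arzela_ascoli_general
    (k α β : ℝ) (hα' : α < 1 / 2) (hβk : β ≤ k) (Γ : Set (ℂ × ℝ))
    (hcomp : ∀ R : ℝ, IsCompact {x ∈ Γ | ‖x‖ ≤ R})
    (f : ℕ → (ℂ × ℝ) → ℂ)
    (hbd : ∃ M : ℝ, ∀ n, ∀ x ∈ Γ,
      Real.exp (k * |x.1.im|) * (1 + ‖x‖) ^ ((1 : ℝ) / 2) * ‖f n x‖ ≤ M)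
    (hequi : EquicontinuousOn
      (fun n (x : ℂ × ℝ) =>
        ((Real.exp (k * |x.1.im|) * (1 + ‖x‖) ^ α : ℝ) : ℂ) * f n x) Γ) :
    ∃ φ : ℕ → ℕ, StrictMono φ ∧
      ∀ ε > 0, ∃ N, ∀ m ≥ N, ∀ n ≥ N, ∀ x ∈ Γ,
        Real.exp (β * |x.1.im|) * (1 + ‖x‖) ^ α * ‖f (φ m) x - f (φ n) x‖ ≤ ε := by
  obtain ⟨M, hM⟩ := hbd
  set g : ℕ → ℂ × ℝ → ℂ := fun n x => (weight k α x : ℂ) * f n x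
  have hg_bdd : ∀ x ∈ Γ, IsBounded (range fun n => g n x) := fun x hx =>
    isBounded_iff_forall_norm_le.2 ⟨M, forall_mem_range.2 fun n => by
      rw [norm_weight_mul]
      exact (mul_le_mul_of_nonneg_right (weight_le_weight le_rfl hα'.le x)
        (norm_nonneg _)).trans (hM n x hx)⟩
  obtain ⟨φ, hφ, hunif⟩ :=
    hequi.exists_strictMono_uniformCauchySeqOn (IsSeparable.of_separableSpace Γ) hg_bdd
  refine ⟨φ, hφ, fun ε hε => ?_⟩
  have htail := (tendsto_one_add_rpow_atTop (sub_neg.2 hα')).const_mul (2 * M)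
  rw [mul_zero] at htail
  obtain ⟨R, hRε, hR⟩ := ((htail.eventually (ge_mem_nhds hε)).and (eventually_ge_atTop 0)).exists
  obtain ⟨N, hN⟩ := Metric.uniformCauchySeqOn_iff.1 (hunif _ (sep_subset _ _) (hcomp R)) ε hε
  refine ⟨N, fun m hm n hn x hx => ?_⟩
  rcases le_or_gt ‖x‖ R with hxR | hxR
  · calc weight β α x * ‖f (φ m) x - f (φ n) x‖
        ≤ weight k α x * ‖f (φ m) x - f (φ n) x‖ := by gcongr; exact weight_le_weight hβk le_rfl x
      _ = dist (g (φ m) x) (g (φ n) x) := by rw [dist_eq_norm, ← mul_sub, norm_weight_mul]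
      _ ≤ ε := (hN m hm n hn x ⟨hx, hxR⟩).le
  · exact (weight_mul_norm_sub_le hβk hα'.le (by linarith) hxR.le (hM _ x hx) (hM _ x hx)).trans hRε

/-- Compactness (Arzelà–Ascoli + diagonal argument) in the weighted spaces:
a uniformly bounded sequence in `C^{1/2,k}` whose weighted versions are
equicontinuous has a subsequence which is Cauchy in the `C^{α,β}` norm, for
any `0 < α < 1/2` and `0 < β ≤ k`. -/
theorem weighted_arzela_ascoli
    (k α β : ℝ) (hk : 0 < k) (hα : 0 < α) (hα' : α < 1 / 2)
    (hβ : 0 < β) (hβk : β ≤ k)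
    (Γ : Set (ℂ × ℝ)) (hΓ : IsClosed Γ)
    (hcomp : ∀ R : ℝ, IsCompact {x ∈ Γ | ‖x‖ ≤ R})
    (f : ℕ → (ℂ × ℝ) → ℂ)
    (hcont : ∀ n, ContinuousOn (f n) Γ)
    (hbd : ∃ M : ℝ, ∀ n, ∀ x ∈ Γ,
      Real.exp (k * |x.1.im|) * (1 + ‖x‖) ^ ((1 : ℝ) / 2) * ‖f n x‖ ≤ M)
    (hequi : EquicontinuousOn
      (fun n (x : ℂ × ℝ) =>
        ((Real.exp (k * |x.1.im|) * (1 + ‖x‖) ^ α : ℝ) : ℂ) * f n x) Γ) :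
    ∃ φ : ℕ → ℕ, StrictMono φ ∧
      ∀ ε > 0, ∃ N, ∀ m ≥ N, ∀ n ≥ N, ∀ x ∈ Γ,
        Real.exp (β * |x.1.im|) * (1 + ‖x‖) ^ α * ‖f (φ m) x - f (φ n) x‖ ≤ ε :=
  weighted_arzela_ascoli_general k α β hα' hβk Γ hcomp f hbd hequi
end
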